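/- arXiv:2502.05302 — 2 statements merged into one kernel-verified Lean document; each statement's English description precedes it below -/
import Mathlib

section
/- Let u* ∈ K̄ solve the uniformly regular equilibrium problem, i.e., F(u*, v) + (k/2r)‖v − u*‖² ≥ 0 for all v ∈ K̄, and suppose F is pseudomonotone (F(u,v) + (k/2r)‖v − u‖² ≥ 0 implies F(v,u) + (k/2r)‖v − u‖² ≤ 0). If u_{n+1} ∈ K̄ satisfies the proximal step inequality λ F(u_{n+1}, v) + ⟨(1 + k/2r)(u_{n+1} − u_n) + (k/2r)(v − u_{n+1}), v − u_{n+1}⟩ ≥ 0 for all v ∈ K̄, with λ > 0, then setting ε = k/(2r), one has ‖u_{n+1} − u*‖² ≤ (1 + ε)²‖u_n − u*‖² − ‖u_{n+1} − (1 + ε)u_n + ε u*‖². -/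
open RealInnerProductSpace

theorem proximal_step_fejer_estimate
    {H : Type*} [NormedAddCommGroup H] [InnerProductSpace ℝ H] [CompleteSpace H]
    (K : Set H) (hK : K.Nonempty) (F : H → H → ℝ)
    (k r lam : ℝ) (hk : 0 < k) (hr : 0 < r) (hlam : 0 < lam)
    (ε : ℝ) (hε : ε = k / (2 * r))
    (ustar un un1 : H) (hustar : ustar ∈ K) (hun : un ∈ K) (hun1 : un1 ∈ K)
    (hsol : ∀ v ∈ K, F ustar v + (k / (2 * r)) * ‖v - ustar‖ ^ 2 ≥ 0)
    (hpseudo : ∀ u ∈ K, ∀ v ∈ K,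
        F u v + (k / (2 * r)) * ‖v - u‖ ^ 2 ≥ 0 →
        F v u + (k / (2 * r)) * ‖v - u‖ ^ 2 ≤ 0)
    (hstep : ∀ v ∈ K,
        lam * F un1 v +
          ⟪(1 + k / (2 * r)) • (un1 - un) + (k / (2 * r)) • (v - un1), v - un1⟫ ≥ 0) :
    ‖un1 - ustar‖ ^ 2 ≤
      (1 + ε) ^ 2 * ‖un - ustar‖ ^ 2 - ‖un1 - (1 + ε) • un + ε • ustar‖ ^ 2 := by
  have hεpos : 0 < ε := by rw [hε]; positivity
  have h1 := hsol un1 hun1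
  have h2 := hpseudo ustar hustar un1 hun1 h1
  have h3 := hstep ustar hustar
  rw [← hε] at h2 h3
  set a := un1 - ustar with ha
  set b := un - ustar with hb
  have key : F un1 ustar ≤ -(ε * ‖a‖ ^ 2) := by linarith
  have h4 : ⟪(1 + ε) • (un1 - un) + ε • (ustar - un1), ustar - un1⟫ ≥ 0 := by
    nlinarith [mul_le_mul_of_nonneg_left key hlam.le,
      mul_nonneg (mul_nonneg hlam.le hεpos.le) (sq_nonneg ‖a‖)]
  have e1 : (1 + ε) • (un1 - un) + ε • (ustar - un1) = a - (1 + ε) • b := by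
    rw [ha, hb]; module
  have e2 : ustar - un1 = -a := by rw [ha]; abel
  rw [e1, e2] at h4
  have h5 : ⟪a - (1 + ε) • b, -a⟫ = -‖a‖ ^ 2 + (1 + ε) * ⟪a, b⟫ := by
    simp [inner_sub_left, inner_smul_left, real_inner_self_eq_norm_sq,
      real_inner_comm b a]
    ring
  rw [h5] at h4
  have e3 : un1 - (1 + ε) • un + ε • ustar = a - (1 + ε) • b := by
    rw [ha, hb]; module
  rw [e3]
  have expand : ‖a - (1 + ε) • b‖ ^ 2
      = ‖a‖ ^ 2 - 2 * ((1 + ε) * ⟪a, b⟫) + (1 + ε) ^ 2 * ‖b‖ ^ 2 := by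
    rw [norm_sub_sq_real, inner_smul_right, norm_smul, mul_pow, Real.norm_eq_abs,
      sq_abs]
  rw [expand]
  linarith
end

section
/- With ε = k/(2r) and under the pseudomonotonicity of F and the proximal step inequality as in the convergence theorem, the inner product ⟨(1 + ε)(u_{n+1} − u_n) + ε(u* − u_{n+1}), u* − u_{n+1}⟩ is bounded below by (λ k/2r)‖u_{n+1} − u*‖², and in particular is nonnegative. -/
open RealInnerProductSpace

theorem proximal_step_inner_lower_bound
    {H : Type*} [NormedAddCommGroup H] [InnerProductSpace ℝ H] [CompleteSpace H]
    (K : Set H) (hK : K.Nonempty) (F : H → H → ℝ)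
    (k r lam : ℝ) (hk : 0 < k) (hr : 0 < r) (hlam : 0 < lam)
    (ε : ℝ) (hε : ε = k / (2 * r))
    (ustar un un1 : H) (hustar : ustar ∈ K) (hun : un ∈ K) (hun1 : un1 ∈ K)
    (hsol : ∀ v ∈ K, F ustar v + ε * ‖v - ustar‖ ^ 2 ≥ 0)
    (hpseudo : ∀ u ∈ K, ∀ v ∈ K,
        F u v + ε * ‖v - u‖ ^ 2 ≥ 0 → F v u + ε * ‖v - u‖ ^ 2 ≤ 0)
    (hstep : ∀ v ∈ K,
        lam * F un1 v +
          ⟪(1 + ε) • (un1 - un) + ε • (v - un1), v - un1⟫ ≥ 0) :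
    ⟪(1 + ε) • (un1 - un) + ε • (ustar - un1), ustar - un1⟫ ≥
        (lam * k / (2 * r)) * ‖un1 - ustar‖ ^ 2 ∧
      ⟪(1 + ε) • (un1 - un) + ε • (ustar - un1), ustar - un1⟫ ≥ 0 := by
  have hε0 : 0 < ε := by
    rw [hε]; positivity
  have h1 := hsol un1 hun1
  have h2 := hpseudo ustar hustar un1 hun1 h1
  -- F un1 ustar ≤ -ε * ‖un1 - ustar‖^2
  have h3 : F un1 ustar ≤ -ε * ‖un1 - ustar‖ ^ 2 := by linarith
  have h4 := hstep ustar hustar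
  have hmain : ⟪(1 + ε) • (un1 - un) + ε • (ustar - un1), ustar - un1⟫ ≥
      lam * ε * ‖un1 - ustar‖ ^ 2 := by
    nlinarith [mul_le_mul_of_nonneg_left h3 hlam.le]
  constructor
  · calc ⟪(1 + ε) • (un1 - un) + ε • (ustar - un1), ustar - un1⟫ ≥
        lam * ε * ‖un1 - ustar‖ ^ 2 := hmain
      _ = (lam * k / (2 * r)) * ‖un1 - ustar‖ ^ 2 := by rw [hε]; ring
  · have : 0 ≤ lam * ε * ‖un1 - ustar‖ ^ 2 := by positivity
    linarith
end
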